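/- Consider an alternating scheme producing (w^{(l)}, θ^{(l)}) where θ^{(l)} maximizes (over the feasible set) min_k F_k(w^{(l-1)}, θ, t^{(l-1)}) with t^{(l-1)} = min_k γ_k(w^{(l-1)}, θ^{(l-1)}), where F_k(w,θ,t) = S_k(w,θ) − t·I_k(w,θ) with S_k, I_k > 0 and γ_k = S_k/I_k, and w^{(l)} maximizes min_k γ_k(w, θ^{(l)}). Then min_k γ_k(w^{(l)}, θ^{(l)}) ≥ min_k γ_k(w^{(l-1)}, θ^{(l-1)}); hence the sequence of objective values is nondecreasing, and if bounded above it converges. -/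

import Mathlib

/-! With `t` the current min-ratio, `min_k (S_k - t I_k)` is `0` at the current point, so the
maximizing `θ`-step keeps it `≥ 0`; since `I_k > 0` this says every ratio at the new point is
`≥ t`, and the `w`-step can only raise the min-ratio further. -/

section FractionalMinRatio

variable {ι : Type*} [Finite ι] [Nonempty ι]

theorem le_iInf_div_iff_nonneg_iInf_sub_mul {s d : ι → ℝ} (hd : ∀ i, 0 < d i) (t : ℝ) :
    t ≤ ⨅ i, s i / d i ↔ 0 ≤ ⨅ i, (s i - t * d i) := by
  rw [le_ciInf_iff (Set.finite_range _).bddBelow, le_ciInf_iff (Set.finite_range _).bddBelow]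
  exact forall_congr' fun i => by rw [le_div_iff₀ (hd i), sub_nonneg]

theorem iInf_div_le_of_iInf_sub_mul_le {s d s' d' : ι → ℝ} (hd : ∀ i, 0 < d i)
    (hd' : ∀ i, 0 < d' i)
    (h : ⨅ i, (s i - (⨅ j, s j / d j) * d i) ≤ ⨅ i, (s' i - (⨅ j, s j / d j) * d' i)) :
    ⨅ i, s i / d i ≤ ⨅ i, s' i / d' i :=
  (le_iInf_div_iff_nonneg_iInf_sub_mul hd' _).2 <|
    ((le_iInf_div_iff_nonneg_iInf_sub_mul hd _).1 le_rfl).trans h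

end FractionalMinRatio

theorem stmt_9_general {W Θ K : Type*} [Fintype K] [Nonempty K]
    (S I : K → W → Θ → ℝ)
    (hI : ∀ k w θ, 0 < I k w θ)
    (Wf : Set W) (Θf : Set Θ)
    (w : ℕ → W) (θ : ℕ → Θ)
    (hw : ∀ l, w l ∈ Wf) (hθ : ∀ l, θ l ∈ Θf)
    (hθmax : ∀ l, ∀ θ' ∈ Θf,
      (⨅ k, (S k (w l) θ' - (⨅ k', S k' (w l) (θ l) / I k' (w l) (θ l)) * I k (w l) θ'))
        ≤ ⨅ k, (S k (w l) (θ (l+1))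
            - (⨅ k', S k' (w l) (θ l) / I k' (w l) (θ l)) * I k (w l) (θ (l+1))))
    (hwmax : ∀ l, ∀ w' ∈ Wf,
      (⨅ k, S k w' (θ (l+1)) / I k w' (θ (l+1)))
        ≤ ⨅ k, S k (w (l+1)) (θ (l+1)) / I k (w (l+1)) (θ (l+1))) :
    Monotone (fun l => ⨅ k, S k (w l) (θ l) / I k (w l) (θ l)) ∧
    (BddAbove (Set.range fun l => ⨅ k, S k (w l) (θ l) / I k (w l) (θ l)) →
      ∃ a, Filter.Tendsto (fun l => ⨅ k, S k (w l) (θ l) / I k (w l) (θ l))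
        Filter.atTop (nhds a)) := by
  have hmono : Monotone (fun l => ⨅ k, S k (w l) (θ l) / I k (w l) (θ l)) :=
    monotone_nat_of_le_succ fun l =>
      (iInf_div_le_of_iInf_sub_mul_le (hI · _ _) (hI · _ _) (hθmax l (θ l) (hθ l))).trans
        (hwmax l (w l) (hw l))
  exact ⟨hmono, fun hbdd => ⟨_, tendsto_atTop_ciSup hmono hbdd⟩⟩

theorem stmt_9 {W Θ K : Type*} [Fintype K] [Nonempty K]
    (S I : K → W → Θ → ℝ)
    (hS : ∀ k w θ, 0 < S k w θ) (hI : ∀ k w θ, 0 < I k w θ)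
    (Wf : Set W) (Θf : Set Θ)
    (w : ℕ → W) (θ : ℕ → Θ)
    (hw : ∀ l, w l ∈ Wf) (hθ : ∀ l, θ l ∈ Θf)
    (hθmax : ∀ l, ∀ θ' ∈ Θf,
      (⨅ k, (S k (w l) θ' - (⨅ k', S k' (w l) (θ l) / I k' (w l) (θ l)) * I k (w l) θ'))
        ≤ ⨅ k, (S k (w l) (θ (l+1))
            - (⨅ k', S k' (w l) (θ l) / I k' (w l) (θ l)) * I k (w l) (θ (l+1))))
    (hwmax : ∀ l, ∀ w' ∈ Wf,
      (⨅ k, S k w' (θ (l+1)) / I k w' (θ (l+1)))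
        ≤ ⨅ k, S k (w (l+1)) (θ (l+1)) / I k (w (l+1)) (θ (l+1))) :
    Monotone (fun l => ⨅ k, S k (w l) (θ l) / I k (w l) (θ l)) ∧
    (BddAbove (Set.range fun l => ⨅ k, S k (w l) (θ l) / I k (w l) (θ l)) →
      ∃ a, Filter.Tendsto (fun l => ⨅ k, S k (w l) (θ l) / I k (w l) (θ l))
        Filter.atTop (nhds a)) :=
  stmt_9_general S I hI Wf Θf w θ hw hθ hθmax hwmax
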